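/- For the task-level weighted objective, for tasks k ≠ l, the derivative of task k's parameters with respect to the weight of task l satisfies ∂θ̂_k/∂σ̃_l = -H_{kk}^{-1} H_{k,K+1} · ∂γ̂/∂σ̃_l, i.e., the between-task influence at the task level is mediated entirely through the shared parameters. -/

import Mathlib

open Matrix

/-- The arrowhead block Hessian of the task-level σ̃-weighted multitask objective at
the minimizer (evaluated at σ̃ = 1). -/
def arrowheadMatrix {K p : ℕ} {d : Fin K → ℕ}
    (Hd : ∀ k, Matrix (Fin (d k)) (Fin (d k)) ℝ)
    (Hr : ∀ k, Matrix (Fin (d k)) (Fin p) ℝ)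
    (Hc : ∀ k, Matrix (Fin p) (Fin (d k)) ℝ)
    (Hcorner : Matrix (Fin p) (Fin p) ℝ) :
    Matrix ((Σ k, Fin (d k)) ⊕ Fin p) ((Σ k, Fin (d k)) ⊕ Fin p) ℝ :=
  Matrix.fromBlocks (Matrix.blockDiagonal' Hd)
    (Matrix.of fun x j => Hr x.1 x.2 j)
    (Matrix.of fun j x => Hc x.1 j x.2)
    Hcorner

theorem Matrix.blockDiagonal'_mulVec_apply {o R : Type*} {m : o → Type*} [Fintype o]
    [DecidableEq o] [∀ k, Fintype (m k)] [NonUnitalNonAssocSemiring R]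
    (M : ∀ k, Matrix (m k) (m k) R) (w : (Σ k, m k) → R) (k : o) (i : m k) :
    (blockDiagonal' M *ᵥ w) ⟨k, i⟩ = (M k *ᵥ fun i' => w ⟨k, i'⟩) i := by
  simp only [mulVec, dotProduct]
  rw [← Finset.univ_sigma_univ, Finset.sum_sigma, Finset.sum_eq_single k]
  · simp only [blockDiagonal'_apply_eq]
  · intro j _ hj
    exact Finset.sum_eq_zero fun x _ => by rw [blockDiagonal'_apply_ne _ _ _ hj.symm, zero_mul]
  · simp

theorem Matrix.eq_neg_inv_mul_mulVec_of_mulVec_add_mulVec_eq_zero {m n : Type*} [Fintype m]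
    [DecidableEq m] [Fintype n] {A : Matrix m m ℝ} (hA : IsUnit A) (B : Matrix m n ℝ)
    {a : m → ℝ} {b : n → ℝ} (h : A *ᵥ a + B *ᵥ b = 0) :
    a = -((A⁻¹ * B) *ᵥ b) := by
  have hdet : IsUnit A.det := (isUnit_iff_isUnit_det A).mp hA
  calc a = (A⁻¹ * A) *ᵥ a := by rw [nonsing_inv_mul A hdet, one_mulVec]
    _ = A⁻¹ *ᵥ (A *ᵥ a) := by rw [mulVec_mulVec]
    _ = -((A⁻¹ * B) *ᵥ b) := by
      rw [eq_neg_of_add_eq_zero_left h, mulVec_neg, mulVec_mulVec]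

section Arrowhead

variable {K p : ℕ} {d : Fin K → ℕ} (Hd : ∀ k, Matrix (Fin (d k)) (Fin (d k)) ℝ)
  (Hr : ∀ k, Matrix (Fin (d k)) (Fin p) ℝ) (Hc : ∀ k, Matrix (Fin p) (Fin (d k)) ℝ)
  (Hcorner : Matrix (Fin p) (Fin p) ℝ)

theorem arrowheadMatrix_mulVec_inl (v : ((Σ j, Fin (d j)) ⊕ Fin p) → ℝ) (k : Fin K)
    (i : Fin (d k)) :
    (arrowheadMatrix Hd Hr Hc Hcorner *ᵥ v) (Sum.inl ⟨k, i⟩) =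
      (Hd k *ᵥ fun i' => v (Sum.inl ⟨k, i'⟩)) i + (Hr k *ᵥ fun j => v (Sum.inr j)) i := by
  rw [arrowheadMatrix, fromBlocks_mulVec, Sum.elim_inl, Pi.add_apply,
    blockDiagonal'_mulVec_apply]
  rfl

theorem arrowheadMatrix_block_eq_of_mulVec_inl_eq_zero {k : Fin K} (hd : IsUnit (Hd k))
    {v : ((Σ j, Fin (d j)) ⊕ Fin p) → ℝ}
    (hv : ∀ i, (arrowheadMatrix Hd Hr Hc Hcorner *ᵥ v) (Sum.inl ⟨k, i⟩) = 0) :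
    (fun i => v (Sum.inl ⟨k, i⟩)) = -(((Hd k)⁻¹ * Hr k) *ᵥ (fun j => v (Sum.inr j))) :=
  eq_neg_inv_mul_mulVec_of_mulVec_add_mulVec_eq_zero hd (Hr k) <| funext fun i => by
    rw [Pi.add_apply, ← arrowheadMatrix_mulVec_inl Hd Hr Hc Hcorner, hv, Pi.zero_apply]

end Arrowhead

theorem stmt_16_general {K p : ℕ} {d : Fin K → ℕ}
    (Hd : ∀ k, Matrix (Fin (d k)) (Fin (d k)) ℝ)
    (Hr : ∀ k, Matrix (Fin (d k)) (Fin p) ℝ)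
    (Hc : ∀ k, Matrix (Fin p) (Fin (d k)) ℝ)
    (Hcorner : Matrix (Fin p) (Fin p) ℝ)
    (hd : ∀ k, IsUnit (Hd k))
    (k l : Fin K) (hkl : l ≠ k) (nl : ℕ)
    -- gradients of the per-sample losses ℓ_{li} and the regularizer Ω_l at ŵ
    (glθ : Fin nl → Fin (d l) → ℝ) (gΩθ : Fin (d l) → ℝ)
    (glγ : Fin nl → Fin p → ℝ) (gΩγ : Fin p → ℝ)
    (v : ((Σ j, Fin (d j)) ⊕ Fin p) → ℝ)
    -- differentiated stationarity condition (implicit function theorem): H v = -g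
    (hv : (arrowheadMatrix Hd Hr Hc Hcorner) *ᵥ v =
      -(Sum.elim
          (fun x : Σ j, Fin (d j) =>
            if h : x.1 = l then ((∑ i, glθ i) + gΩθ) (Fin.cast (congrArg d h) x.2) else 0)
          ((∑ i, glγ i) + gΩγ))) :
    (fun i => v (Sum.inl ⟨k, i⟩)) =
      -(((Hd k)⁻¹ * Hr k) *ᵥ (fun j => v (Sum.inr j))) := by
  refine arrowheadMatrix_block_eq_of_mulVec_inl_eq_zero Hd Hr Hc Hcorner (hd k) fun i => ?_
  rw [hv, Pi.neg_apply, Sum.elim_inl, dif_neg hkl.symm, neg_zero]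

/-- Task-level between-task influence (Proposition B.1, Eq. (B.1)). With
`v = ∂ŵ/∂σ̃_l` the derivative of the minimizer of the task-level weighted multitask
objective `L(w, σ̃) = ∑_j σ̃_j [(1/n_j) ∑_i ℓ_{ji}(θ_j, γ) + Ω_j(θ_j, γ)]` in the
weight `σ̃_l` of task `l ≠ k`, solving (by the implicit function theorem) `H v = -g`
where `g` has the aggregated gradients of task `l`'s losses and regularizer in block
`l` and the shared block (and zero in block `k`), the task-`k` block of `v`
satisfies `∂θ̂_k/∂σ̃_l = -H_{kk}⁻¹ H_{k,K+1} ∂γ̂/∂σ̃_l`: the task-level between-task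
influence is mediated entirely through the shared parameters. -/
theorem stmt_16 {K p : ℕ} {d : Fin K → ℕ}
    (Hd : ∀ k, Matrix (Fin (d k)) (Fin (d k)) ℝ)
    (Hr : ∀ k, Matrix (Fin (d k)) (Fin p) ℝ)
    (Hc : ∀ k, Matrix (Fin p) (Fin (d k)) ℝ)
    (Hcorner : Matrix (Fin p) (Fin p) ℝ)
    (hd : ∀ k, IsUnit (Hd k))
    (N : Matrix (Fin p) (Fin p) ℝ)
    (hNdef : N = Hcorner - ∑ j, Hc j * (Hd j)⁻¹ * Hr j)
    (hN : IsUnit N)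
    (k l : Fin K) (hkl : l ≠ k) (nl : ℕ)
    -- gradients of the per-sample losses ℓ_{li} and the regularizer Ω_l at ŵ
    (glθ : Fin nl → Fin (d l) → ℝ) (gΩθ : Fin (d l) → ℝ)
    (glγ : Fin nl → Fin p → ℝ) (gΩγ : Fin p → ℝ)
    -- ŵ as a function of the task weight σ̃_l, with derivative v at σ̃_l = 1
    (what : ℝ → (((Σ j, Fin (d j)) ⊕ Fin p) → ℝ))
    (v : ((Σ j, Fin (d j)) ⊕ Fin p) → ℝ)
    (hderiv : HasDerivAt what v 1)
    -- differentiated stationarity condition (implicit function theorem): H v = -g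
    (hv : (arrowheadMatrix Hd Hr Hc Hcorner) *ᵥ v =
      -(Sum.elim
          (fun x : Σ j, Fin (d j) =>
            if h : x.1 = l then ((∑ i, glθ i) + gΩθ) (Fin.cast (congrArg d h) x.2) else 0)
          ((∑ i, glγ i) + gΩγ))) :
    (fun i => v (Sum.inl ⟨k, i⟩)) =
      -(((Hd k)⁻¹ * Hr k) *ᵥ (fun j => v (Sum.inr j))) :=
  stmt_16_general Hd Hr Hc Hcorner hd k l hkl nl glθ gΩθ glγ gΩγ v hv
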